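/- arXiv:1912.13289 — 9 statements merged into one kernel-verified Lean document; each statement's English description precedes it below -/
import Mathlib

section
/- Let H ∈ ℕ, let b_1,…,b_H ∈ ℝ, and let a_1,…,a_H ∈ ℝ. Then for every integer n ≥ 1, ∑_{i=1}^{H} a_i b_i^{n} = ∑_{i=1}^{H} 𝓕_i^{(n)} ( ∑_{j=1}^{H} a_j b_j^{i} ). -/
/-- `calC H b r` is the coefficient of `t^(H-r)` in the polynomial `∏_{i=1}^H (t + b i)`,
i.e. the `r`-th elementary symmetric polynomial of `b 1, …, b H`. -/
noncomputable def calC (H : ℕ) (b : ℕ → ℝ) (r : ℕ) : ℝ :=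
  (∏ i ∈ Finset.Icc 1 H, (Polynomial.X + Polynomial.C (b i))).coeff (H - r)

/-- `calF H b i n` is `𝓕_i^{(n)}`: it equals the Kronecker delta `δ_{n,i}` when `n ≤ H`,
and satisfies the recursion `𝓕_i^{(n)} = ∑_{r=1}^H (−1)^{r+1} 𝒞_r^H 𝓕_i^{(n−r)}` when `n > H`. -/
noncomputable def calF (H : ℕ) (b : ℕ → ℝ) (i : ℕ) : ℕ → ℝ
  | n =>
    if _h : n ≤ H then (if n = i then 1 else 0)
    else
      ∑ r ∈ (Finset.Icc 1 H).attach,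
        (-1 : ℝ) ^ ((r : ℕ) + 1) * calC H b r * calF H b i (n - r)
  termination_by n => n
  decreasing_by
    have h1 := Finset.mem_Icc.mp r.2
    omega

/-!
Every `b j` is a root of `∏ i (t - b i) = ∑ r (-1)^r 𝒞_r t^(H-r)`, so the sequence
`s n = ∑ j a j * b j ^ n` satisfies the linear recurrence `s n = ∑ r (-1)^(r+1) 𝒞_r s (n-r)` for
`n > H`. The `𝓕_i` are the solutions of this recurrence whose initial values on `1, …, H` are
`δ_i`, so by linearity `s n = ∑ i 𝓕_i^{(n)} s i`.
-/

open Polynomial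

theorem Multiset.pow_eq_sum_esymm_mul_pow_of_mem {R : Type*} [CommRing R] {s : Multiset R}
    {x : R} (hx : x ∈ s) {n : ℕ} (hn : Multiset.card s ≤ n) :
    x ^ n = ∑ j ∈ Finset.Icc 1 (Multiset.card s), (-1) ^ (j + 1) * s.esymm j * x ^ (n - j) := by
  have hroot : ((s.map fun t => X - C t).prod).eval x = 0 := by
    rw [eval_multiset_prod]
    exact Multiset.prod_eq_zero
      (Multiset.mem_map.mpr ⟨_, Multiset.mem_map.mpr ⟨x, hx, rfl⟩, by simp⟩)
  rw [Multiset.prod_X_sub_X_eq_sum_esymm, eval_finsetSum] at hroot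
  have hvieta : ∑ j ∈ Finset.Icc 0 (Multiset.card s), (-1) ^ j * s.esymm j * x ^ (n - j) = 0 := by
    rw [← mul_zero (x ^ (n - Multiset.card s)), ← hroot, ← Nat.range_succ_eq_Icc_zero,
      Finset.mul_sum]
    refine Finset.sum_congr rfl fun j hj => ?_
    rw [show n - j = n - Multiset.card s + (Multiset.card s - j) by grind, pow_add]
    simp only [eval_mul, eval_pow, eval_neg, eval_one, eval_C, eval_X]
    ring
  have hesymm_zero : s.esymm 0 = 1 := by simp [Multiset.esymm]
  rw [← Finset.add_sum_Ioc_eq_sum_Icc (Nat.zero_le _), hesymm_zero] at hvieta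
  simp only [pow_zero, one_mul, Nat.sub_zero] at hvieta
  rw [eq_neg_of_add_eq_zero_left hvieta, ← Finset.sum_neg_distrib]
  refine Finset.sum_congr rfl fun j _ => ?_
  ring

section

variable (H : ℕ) (b : ℕ → ℝ)

lemma calF_of_le (i : ℕ) {n : ℕ} (h : n ≤ H) : calF H b i n = if n = i then 1 else 0 := by
  rw [calF, dif_pos h]

lemma calF_of_lt (i : ℕ) {n : ℕ} (h : H < n) :
    calF H b i n = ∑ r ∈ Finset.Icc 1 H, (-1) ^ (r + 1) * calC H b r * calF H b i (n - r) := by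
  rw [calF, dif_neg h.not_ge]
  exact Finset.sum_attach (Finset.Icc 1 H) fun r => (-1) ^ (r + 1) * calC H b r * calF H b i (n - r)

lemma calC_eq_esymm {r : ℕ} (hr : r ≤ H) :
    calC H b r = ((Finset.Icc 1 H).val.map b).esymm r := by
  have hcard : Multiset.card (Finset.Icc 1 H).val = H := by simp
  rw [calC, Finset.prod_eq_multiset_prod, Multiset.prod_X_add_C_coeff' _ _ (by omega), hcard,
    Nat.sub_sub_self hr]

lemma pow_eq_sum_calC_mul_pow {j : ℕ} (hj : j ∈ Finset.Icc 1 H) {n : ℕ} (hn : H ≤ n) :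
    b j ^ n = ∑ r ∈ Finset.Icc 1 H, (-1) ^ (r + 1) * calC H b r * b j ^ (n - r) := by
  have hcard : Multiset.card ((Finset.Icc 1 H).val.map b) = H := by simp
  have hmem : b j ∈ (Finset.Icc 1 H).val.map b := Multiset.mem_map_of_mem b hj
  rw [Multiset.pow_eq_sum_esymm_mul_pow_of_mem hmem (by rwa [hcard]), hcard]
  refine Finset.sum_congr rfl fun r hr => ?_
  rw [calC_eq_esymm H b (Finset.mem_Icc.mp hr).2]

lemma eq_sum_calF_mul_of_recurrence (c : ℕ → ℝ)
    (hc : ∀ n, H < n → c n = ∑ r ∈ Finset.Icc 1 H, (-1) ^ (r + 1) * calC H b r * c (n - r)) :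
    ∀ n, 1 ≤ n → c n = ∑ i ∈ Finset.Icc 1 H, calF H b i n * c i := by
  intro n
  induction n using Nat.strong_induction_on with
  | _ n ih =>
    intro hn
    rcases le_or_gt n H with hnH | hHn
    · simp only [calF_of_le H b _ hnH, ite_mul, one_mul, zero_mul, Finset.sum_ite_eq,
        Finset.mem_Icc, hn, hnH, and_self, if_true]
    · calc c n
          = ∑ r ∈ Finset.Icc 1 H, (-1) ^ (r + 1) * calC H b r *
              ∑ i ∈ Finset.Icc 1 H, calF H b i (n - r) * c i := by
            rw [hc n hHn]
            refine Finset.sum_congr rfl fun r hr => ?_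
            have := Finset.mem_Icc.mp hr
            rw [ih (n - r) (by omega) (by omega)]
        _ = ∑ i ∈ Finset.Icc 1 H, calF H b i n * c i := by
            simp only [calF_of_lt H b _ hHn, Finset.mul_sum, Finset.sum_mul]
            rw [Finset.sum_comm]
            refine Finset.sum_congr rfl fun i _ => Finset.sum_congr rfl fun r _ => ?_
            ring

end

theorem statement1 (H : ℕ) (b a : ℕ → ℝ) :
    ∀ n : ℕ, 1 ≤ n →
      ∑ i ∈ Finset.Icc 1 H, a i * b i ^ n
        = ∑ i ∈ Finset.Icc 1 H, calF H b i n * (∑ j ∈ Finset.Icc 1 H, a j * b j ^ i) := by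
  refine eq_sum_calF_mul_of_recurrence H b (fun n => ∑ j ∈ Finset.Icc 1 H, a j * b j ^ n) ?_
  intro n hn
  simp only [Finset.mul_sum]
  rw [Finset.sum_comm]
  refine Finset.sum_congr rfl fun j hj => ?_
  rw [pow_eq_sum_calC_mul_pow H b hj hn.le, Finset.mul_sum]
  refine Finset.sum_congr rfl fun r _ => ?_
  ring
end

section
/- There exist constants A_0, A_1, B_0, B_1 > 1 such that for every parameter w = (a,b) ∈ W and every x ∈ (ℤ_{≥0})^M, (1/A_0) ∏_{m=1}^{M} (1/A_1)^{x_m} ≤ p(x|w)/q(x) ≤ B_0 ∏_{m=1}^{M} B_1^{x_m}. -/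
/-!
A Poisson term `e^{-b} b^n / n!` with mean `b ∈ [γ₁, γ₂]`, `γ₁ > 0`, lies between
`e^{-γ₂} γ₁^n / n!` and `γ₂^n / n!`. Taking products over coordinates and convex combinations over
components, every mixture with means in `[γ₁, γ₂]` lies between two envelopes `L(x) ≤ U(x)`, so the
ratio of two such mixtures lies in `[L/U, U/L]`, and `U/L = e^{M γ₂} ∏ₘ (γ₂/γ₁)^{xₘ}`. It remains
to choose `[γ₁, γ₂]` containing `[β₁, β₂]` and the finitely many true means.
-/

/-- The M-dimensional Poisson mixture density at `x ∈ (ℤ≥0)^M`, with mixing weights `a`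
and component means `b k : Fin M → ℝ`. -/
noncomputable def mixture (H M : ℕ) (a : Fin H → ℝ) (b : Fin H → Fin M → ℝ)
    (x : Fin M → ℕ) : ℝ :=
  ∑ k, a k * ∏ m, Real.exp (-(b k m)) * (b k m) ^ (x m) / (Nat.factorial (x m))

open Real Set Finset Nat

lemma poisson_term_mem_Icc {γ₁ γ₂ b : ℝ} (hγ₁ : 0 < γ₁) (hb : b ∈ Icc γ₁ γ₂) (n : ℕ) :
    exp (-b) * b ^ n / n ! ∈ Icc (exp (-γ₂) * γ₁ ^ n / n !) (γ₂ ^ n / n !) := by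
  have hb₀ : 0 ≤ b := hγ₁.le.trans hb.1
  constructor
  · gcongr
    exacts [hb.2, hb.1]
  · gcongr
    calc exp (-b) * b ^ n ≤ 1 * b ^ n := by gcongr; exact exp_le_one_iff.mpr (neg_nonpos.mpr hb₀)
      _ ≤ γ₂ ^ n := by rw [one_mul]; gcongr; exact hb.2

lemma mixture_mem_Icc {H M : ℕ} {a : Fin H → ℝ} {b : Fin H → Fin M → ℝ} {γ₁ γ₂ : ℝ}
    (hγ₁ : 0 < γ₁) (ha : ∀ k, 0 ≤ a k) (hsum : ∑ k, a k = 1)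
    (hb : ∀ k m, b k m ∈ Icc γ₁ γ₂) (x : Fin M → ℕ) :
    mixture H M a b x ∈
      Icc (∏ m, exp (-γ₂) * γ₁ ^ x m / (x m)!) (∏ m, γ₂ ^ x m / (x m)!) := by
  refine (convex_Icc _ _).sum_mem (fun k _ => ha k) hsum fun k _ => ⟨?_, ?_⟩
  · refine prod_le_prod (fun m _ => by positivity) fun m _ => ?_
    exact (poisson_term_mem_Icc hγ₁ (hb k m) (x m)).1
  · refine prod_le_prod (fun m _ => ?_) fun m _ => (poisson_term_mem_Icc hγ₁ (hb k m) (x m)).2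
    have := hγ₁.le.trans (hb k m).1
    positivity

lemma prod_upper_envelope_eq {ι : Type*} [Fintype ι] {γ₁ : ℝ} (hγ₁ : γ₁ ≠ 0) (γ₂ : ℝ)
    (x : ι → ℕ) :
    ∏ m, γ₂ ^ x m / (x m)! =
      (exp γ₂ ^ Fintype.card ι * ∏ m, (γ₂ / γ₁) ^ x m) * ∏ m, exp (-γ₂) * γ₁ ^ x m / (x m)! := by
  rw [← Finset.card_univ, ← prod_const, ← prod_mul_distrib, ← prod_mul_distrib]
  refine prod_congr rfl fun m _ => ?_
  rw [div_pow, exp_neg]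
  field_simp

lemma inv_le_div_and_div_le_of_mem_Icc {p q L U K : ℝ} (hL : 0 < L) (hp : p ∈ Icc L U)
    (hq : q ∈ Icc L U) (hU : U ≤ K * L) : K⁻¹ ≤ p / q ∧ p / q ≤ K := by
  have hq₀ : 0 < q := hL.trans_le hq.1
  have hK : 0 < K := pos_of_mul_pos_left (hL.trans_le (hp.1.trans (hp.2.trans hU))) hL.le
  constructor
  · rw [le_div_iff₀ hq₀, inv_mul_le_iff₀ hK]
    calc q ≤ U := hq.2
      _ ≤ K * L := hU
      _ ≤ K * p := by gcongr; exact hp.1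
  · rw [div_le_iff₀ hq₀]
    calc p ≤ U := hp.2
      _ ≤ K * L := hU
      _ ≤ K * q := by gcongr; exact hq.1

lemma exists_pos_Icc_superset {ι : Type*} [Finite ι] {f : ι → ℝ} (hf : ∀ i, 0 < f i)
    {β₁ β₂ : ℝ} (hβ₁ : 0 < β₁) (hβ : β₁ ≤ β₂) :
    ∃ γ₁ γ₂, 0 < γ₁ ∧ γ₁ < γ₂ ∧ Icc β₁ β₂ ⊆ Icc γ₁ γ₂ ∧ ∀ i, f i ∈ Icc γ₁ γ₂ := by
  obtain ⟨⟨δ, hδ⟩, hδf⟩ := Finite.exists_ge (α := Ioi (0 : ℝ)) fun i => ⟨f i, hf i⟩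
  obtain ⟨C, hCf⟩ := Finite.exists_le f
  refine ⟨min β₁ δ, max β₂ C + 1, lt_min hβ₁ hδ, ?_, ?_, fun i => ⟨?_, ?_⟩⟩
  · linarith [min_le_left β₁ δ, le_max_left β₂ C]
  · exact Icc_subset_Icc (min_le_left _ _) (by linarith [le_max_left β₂ C])
  · exact (min_le_right _ _).trans (hδf i)
  · linarith [hCf i, le_max_right β₂ C]

theorem statement5 (M H Hstar : ℕ)
    (astar : Fin Hstar → ℝ) (bstar : Fin Hstar → Fin M → ℝ)
    (hastar : ∀ k, 0 < astar k) (hastarsum : ∑ k, astar k = 1)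
    (hbstar : ∀ k m, 0 < bstar k m)
    (β₁ β₂ : ℝ) (hβ₁ : 0 < β₁) (hβ : β₁ ≤ β₂) :
    ∃ A₀ A₁ B₀ B₁ : ℝ, 1 < A₀ ∧ 1 < A₁ ∧ 1 < B₀ ∧ 1 < B₁ ∧
      ∀ (a : Fin H → ℝ) (b : Fin H → Fin M → ℝ),
        (∀ k, 0 ≤ a k) → (∑ k, a k = 1) →
        (∀ k m, b k m ∈ Set.Icc β₁ β₂) →
        ∀ x : Fin M → ℕ,
          (1 / A₀) * ∏ m, (1 / A₁) ^ (x m)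
              ≤ mixture H M a b x / mixture Hstar M astar bstar x ∧
          mixture H M a b x / mixture Hstar M astar bstar x
              ≤ B₀ * ∏ m, B₁ ^ (x m) := by
  obtain ⟨γ₁, γ₂, hγ₁, hγ₁₂, hβγ, hbstarγ⟩ :=
    exists_pos_Icc_superset (f := fun km : Fin Hstar × Fin M => bstar km.1 km.2)
      (fun km => hbstar km.1 km.2) hβ₁ hβ
  have hc : 1 < exp γ₂ := one_lt_exp_iff.mpr (hγ₁.trans hγ₁₂)
  have hr : 1 < γ₂ / γ₁ := (one_lt_div hγ₁).mpr hγ₁₂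
  -- `U/L` carries the factor `exp γ₂ ^ M`; one more factor keeps `B₀ > 1` when `M = 0`.
  refine ⟨exp γ₂ ^ (M + 1), γ₂ / γ₁, exp γ₂ ^ (M + 1), γ₂ / γ₁,
    one_lt_pow₀ hc M.succ_ne_zero, hr, one_lt_pow₀ hc M.succ_ne_zero, hr,
    fun a b ha hsum hb x => ?_⟩
  have hp := mixture_mem_Icc hγ₁ ha hsum (fun k m => hβγ (hb k m)) x
  have hq := mixture_mem_Icc hγ₁ (fun k => (hastar k).le) hastarsum
    (fun k m => hbstarγ (k, m)) x
  have hU : ∏ m, γ₂ ^ x m / (x m)! ≤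
      (exp γ₂ ^ (M + 1) * ∏ m, (γ₂ / γ₁) ^ x m) * ∏ m, exp (-γ₂) * γ₁ ^ x m / (x m)! := by
    rw [prod_upper_envelope_eq hγ₁.ne' γ₂ x, Fintype.card_fin]
    gcongr
    exacts [hc.le, M.le_succ]
  simp only [one_div, inv_pow, prod_inv_distrib, ← mul_inv]
  exact inv_le_div_and_div_le_of_mem_Icc (by positivity) hp hq hU
end

section
/- There exist constants C_0, C_1 > 0 such that for every parameter w ∈ W and every x ∈ (ℤ_{≥0})^M, S(p(x|w)/q(x)) ≤ C_0 ∑_{m=1}^{M} x_m + C_1, where S(t) := (−log t + t − 1)/(t−1)² for t > 0, t ≠ 1, and S(1) := 1. -/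
/-- `S t = (−log t + t − 1)/(t−1)²` for `t ≠ 1`, and `S 1 = 1`. -/
noncomputable def S (t : ℝ) : ℝ :=
  if t = 1 then 1 else (-Real.log t + t - 1) / (t - 1) ^ 2

open Real Finset
open scoped Nat

lemma S_le_two_of_half_le {t : ℝ} (ht : 1 / 2 ≤ t) : S t ≤ 2 := by
  unfold S
  split_ifs with h1
  · norm_num
  have hden : 0 < (t - 1) ^ 2 := pow_two_pos_of_ne_zero (sub_ne_zero.mpr h1)
  have hinv : -log t ≤ t⁻¹ - 1 := by
    simpa [log_inv] using log_le_sub_one_of_pos (inv_pos.mpr (by linarith : (0 : ℝ) < t))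
  rw [div_le_iff₀ hden]
  -- `t⁻¹ - 1 + t - 1 = (t - 1)² / t ≤ 2 (t - 1)²` as `t ≥ 1/2`
  have hinv_mul : t⁻¹ * t = 1 := inv_mul_cancel₀ (by linarith)
  nlinarith [mul_nonneg (sq_nonneg (t - 1)) (by linarith : (0 : ℝ) ≤ 2 * t - 1)]

lemma S_le_neg_log_of_lt_half {t : ℝ} (h0 : 0 < t) (ht : t < 1 / 2) : S t ≤ 4 * -log t := by
  have hne : t ≠ 1 := by intro h; linarith
  have hden : 1 / 4 ≤ (t - 1) ^ 2 := by nlinarith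
  rw [S, if_neg hne, div_le_iff₀ (by linarith)]
  nlinarith [log_le_sub_one_of_pos h0]

lemma S_le_of_exp_neg_le {t c : ℝ} (hc : 0 ≤ c) (h : exp (-c) ≤ t) : S t ≤ 4 * c + 2 := by
  have h0 : 0 < t := (exp_pos _).trans_le h
  have hlog : -log t ≤ c := by
    have := log_le_log (exp_pos _) h
    rw [log_exp] at this
    linarith
  rcases le_or_gt (1 / 2) t with ht | ht
  · linarith [S_le_two_of_half_le ht]
  · linarith [S_le_neg_log_of_lt_half h0 ht]

section ConvexCombination

variable {ι : Type*} [Fintype ι] {a f : ι → ℝ} {c : ℝ}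

lemma sum_mul_le_of_forall_le (ha : ∀ i, 0 ≤ a i) (hsum : ∑ i, a i = 1) (hf : ∀ i, f i ≤ c) :
    ∑ i, a i * f i ≤ c :=
  calc ∑ i, a i * f i ≤ ∑ i, a i * c := sum_le_sum fun i _ => mul_le_mul_of_nonneg_left (hf i) (ha i)
    _ = c := by rw [← sum_mul, hsum, one_mul]

lemma le_sum_mul_of_forall_le (ha : ∀ i, 0 ≤ a i) (hsum : ∑ i, a i = 1) (hf : ∀ i, c ≤ f i) :
    c ≤ ∑ i, a i * f i :=
  calc c = ∑ i, a i * c := by rw [← sum_mul, hsum, one_mul]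
    _ ≤ ∑ i, a i * f i := sum_le_sum fun i _ => mul_le_mul_of_nonneg_left (hf i) (ha i)

end ConvexCombination

section Mixture

variable {H M : ℕ} {a : Fin H → ℝ} {b : Fin H → Fin M → ℝ} {x : Fin M → ℕ}

lemma exp_mul_pow_div_factorial_le {β B : ℝ} (hβ : 0 ≤ β) (hβB : β ≤ B) (n : ℕ) :
    exp (-β) * β ^ n / n ! ≤ B ^ n / n ! := by
  gcongr
  calc exp (-β) * β ^ n ≤ 1 * β ^ n := by gcongr; exact exp_le_one_iff.mpr (by linarith)
    _ ≤ B ^ n := by rw [one_mul]; gcongr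

lemma mixture_le {B : ℝ} (ha : ∀ k, 0 ≤ a k) (hsum : ∑ k, a k = 1) (hb : ∀ k m, 0 ≤ b k m)
    (hbB : ∀ k m, b k m ≤ B) : mixture H M a b x ≤ ∏ m, B ^ x m / (x m)! :=
  sum_mul_le_of_forall_le ha hsum fun k =>
    prod_le_prod (fun m _ => by have := hb k m; positivity)
      fun m _ => exp_mul_pow_div_factorial_le (hb k m) (hbB k m) (x m)

lemma le_mixture {β₁ β₂ : ℝ} (hβ₁ : 0 ≤ β₁) (ha : ∀ k, 0 ≤ a k) (hsum : ∑ k, a k = 1)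
    (hb : ∀ k m, b k m ∈ Set.Icc β₁ β₂) :
    ∏ m, exp (-β₂) * β₁ ^ x m / (x m)! ≤ mixture H M a b x :=
  le_sum_mul_of_forall_le ha hsum fun k =>
    prod_le_prod (fun m _ => by positivity) fun m _ => by
      obtain ⟨h₁, h₂⟩ := hb k m
      gcongr

lemma mixture_pos (ha : ∀ k, 0 < a k) (hsum : ∑ k, a k = 1) (hb : ∀ k m, 0 < b k m) :
    0 < mixture H M a b x := by
  have : Nonempty (Fin H) := by
    by_contra h
    simp [not_nonempty_iff.mp h] at hsum
  exact sum_pos (fun k _ => mul_pos (ha k) (prod_pos fun m _ => by have := hb k m; positivity))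
    univ_nonempty

lemma exp_mul_pow_div_factorial_eq {β₁ β₂ B : ℝ} (hβ₁ : 0 < β₁) (hB : 0 < B) (n : ℕ) :
    exp (-β₂ - log (B / β₁) * n) * (B ^ n / n !) = exp (-β₂) * β₁ ^ n / n ! := by
  have hpow : exp (-(log (B / β₁) * n)) = (β₁ / B) ^ n := by
    have hlog : -(log (B / β₁) * n) = n * log (β₁ / B) := by rw [← inv_div, log_inv]; ring
    rw [hlog, exp_nat_mul, exp_log (div_pos hβ₁ hB)]
  rw [sub_eq_add_neg, exp_add, hpow, div_pow]
  field_simp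

lemma prod_lower_eq_exp_mul_prod_upper {β₁ β₂ B : ℝ} (hβ₁ : 0 < β₁) (hB : 0 < B) :
    ∏ m, exp (-β₂) * β₁ ^ x m / (x m)!
      = exp (-(M * β₂ + log (B / β₁) * ∑ m, (x m : ℝ))) * ∏ m, B ^ x m / (x m)! := by
  have hexp : -(M * β₂ + log (B / β₁) * ∑ m, (x m : ℝ)) = ∑ m, (-β₂ - log (B / β₁) * x m) := by
    simp only [mul_sum, neg_add_rev, sum_sub_distrib, sum_neg_distrib, sum_const, card_univ,
      Fintype.card_fin, nsmul_eq_mul]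
    ring
  rw [hexp, exp_sum, ← prod_mul_distrib]
  exact prod_congr rfl fun m _ => (exp_mul_pow_div_factorial_eq hβ₁ hB (x m)).symm

lemma exp_neg_le_mixture_div_mixture {H' : ℕ} {a' : Fin H' → ℝ} {b' : Fin H' → Fin M → ℝ}
    {β₁ β₂ B : ℝ} (hβ₁ : 0 < β₁) (hB : 0 < B) (ha : ∀ k, 0 ≤ a k) (hsum : ∑ k, a k = 1)
    (hb : ∀ k m, b k m ∈ Set.Icc β₁ β₂) (ha' : ∀ k, 0 < a' k) (hsum' : ∑ k, a' k = 1)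
    (hb' : ∀ k m, 0 < b' k m) (hb'B : ∀ k m, b' k m ≤ B) :
    exp (-(M * β₂ + log (B / β₁) * ∑ m, (x m : ℝ))) ≤ mixture H M a b x / mixture H' M a' b' x := by
  rw [le_div_iff₀ (mixture_pos ha' hsum' hb')]
  calc exp (-(M * β₂ + log (B / β₁) * ∑ m, (x m : ℝ))) * mixture H' M a' b' x
      ≤ exp (-(M * β₂ + log (B / β₁) * ∑ m, (x m : ℝ))) * ∏ m, B ^ x m / (x m)! := by
        gcongr
        exact mixture_le (fun k => (ha' k).le) hsum' (fun k m => (hb' k m).le) hb'B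
    _ = ∏ m, exp (-β₂) * β₁ ^ x m / (x m)! := (prod_lower_eq_exp_mul_prod_upper hβ₁ hB).symm
    _ ≤ mixture H M a b x := le_mixture hβ₁.le ha hsum hb

end Mixture

theorem statement6 (M H Hstar : ℕ)
    (astar : Fin Hstar → ℝ) (bstar : Fin Hstar → Fin M → ℝ)
    (hastar : ∀ k, 0 < astar k) (hastarsum : ∑ k, astar k = 1)
    (hbstar : ∀ k m, 0 < bstar k m)
    (β₁ β₂ : ℝ) (hβ₁ : 0 < β₁) (hβ : β₁ ≤ β₂) :
    ∃ C₀ > (0 : ℝ), ∃ C₁ > (0 : ℝ),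
      ∀ (a : Fin H → ℝ) (b : Fin H → Fin M → ℝ),
        (∀ k, 0 ≤ a k) → (∑ k, a k = 1) →
        (∀ k m, b k m ∈ Set.Icc β₁ β₂) →
        ∀ x : Fin M → ℕ,
          S (mixture H M a b x / mixture Hstar M astar bstar x)
            ≤ C₀ * ∑ m, (x m : ℝ) + C₁ := by
  obtain ⟨B₀, hB₀⟩ := Finite.exists_le fun km : Fin Hstar × Fin M => bstar km.1 km.2
  obtain ⟨B, hβ₁B, hbstarB⟩ : ∃ B, β₁ < B ∧ ∀ k m, bstar k m ≤ B :=
    ⟨max B₀ β₁ + 1, by linarith [le_max_right B₀ β₁],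
      fun k m => by linarith [hB₀ (k, m), le_max_left B₀ β₁]⟩
  have hlog : 0 < log (B / β₁) := log_pos ((one_lt_div hβ₁).mpr hβ₁B)
  have hβ₂ : 0 < β₂ := hβ₁.trans_le hβ
  refine ⟨4 * log (B / β₁), by positivity, 4 * (M * β₂) + 2, by positivity,
    fun a b ha hsum hb x => ?_⟩
  calc S (mixture H M a b x / mixture Hstar M astar bstar x)
      ≤ 4 * (M * β₂ + log (B / β₁) * ∑ m, (x m : ℝ)) + 2 :=
        S_le_of_exp_neg_le (by positivity) (exp_neg_le_mixture_div_mixture hβ₁ (hβ₁.trans hβ₁B)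
          ha hsum hb hastar hastarsum hbstar hbstarB)
    _ = _ := by ring
end

section
/- Let H, H*, M ∈ ℕ, let a_1,…,a_H ∈ ℝ and a*_1,…,a*_{H*} ∈ ℝ, and let b_1,…,b_H and b*_1,…,b*_{H*} be vectors in (ℝ_{>0})^M. If ∑_{k=1}^{H} a_k b_k^{x} = ∑_{k=1}^{H*} a*_k (b*_k)^{x} for every multi-index x ∈ {0,1,…,H+H*−1}^M, then ∑_{k=1}^{H} a_k b_k^{x} = ∑_{k=1}^{H*} a*_k (b*_k)^{x} for every x ∈ (ℤ_{≥0})^M. -/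
/-!
With `p = ∏ k (X - t k)`, monic of degree `N` and vanishing at every `t k`, one has
`t k ^ n = (X ^ n %ₘ p).eval (t k)`, so every power sum `∑ k, c k * t k ^ n` is a linear
combination of the first `N` of them. In several variables this is applied one coordinate at a
time, and two families of sizes `H`, `H*` are compared by merging them into one of size `H + H*`.
-/

open Polynomial Finset

theorem sum_mul_pow_eq_zero_of_forall_lt_card {R ι : Type*} [CommRing R] [Nontrivial R]
    [Fintype ι] (c t : ι → R) (h : ∀ n < Fintype.card ι, ∑ k, c k * t k ^ n = 0) (n : ℕ) :
    ∑ k, c k * t k ^ n = 0 := by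
  rcases isEmpty_or_nonempty ι with _ | _
  · simp
  set p : R[X] := ∏ k, (X - C (t k))
  have hp : p.Monic := monic_prod_X_sub_C t univ
  have hdeg : p.natDegree = Fintype.card ι := natDegree_finsetProd_X_sub_C_eq_card univ t
  have hp1 : p ≠ 1 := fun h1 => by simp [h1, eq_comm] at hdeg
  set r := X ^ n %ₘ p
  have hr : r.natDegree < Fintype.card ι := hdeg ▸ natDegree_modByMonic_lt _ hp hp1
  have hroot (k : ι) : t k ^ n = ∑ i ∈ range (Fintype.card ι), r.coeff i * t k ^ i := by
    have hk : aeval (t k) p = 0 := by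
      simpa [p, aeval_def, eval₂_finsetProd] using prod_eq_zero (mem_univ k) (sub_self (t k))
    rw [← eval_eq_sum_range' hr, ← coe_aeval_eq_eval, aeval_modByMonic_eq_self_of_root hk]
    simp
  calc ∑ k, c k * t k ^ n
      = ∑ i ∈ range (Fintype.card ι), r.coeff i * ∑ k, c k * t k ^ i := by
        simp only [hroot, mul_sum, sum_comm (s := univ)]
        exact sum_congr rfl fun i _ => sum_congr rfl fun k _ => by ring
    _ = 0 := sum_eq_zero fun i hi => by rw [h i (mem_range.mp hi), mul_zero]

theorem prod_pow_update {M σ : Type*} [CommMonoid M] [Fintype σ] [DecidableEq σ]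
    (f : σ → M) (x : σ → ℕ) (m : σ) (n : ℕ) :
    ∏ i, f i ^ Function.update x m n i = f m ^ n * ∏ i ∈ {m}ᶜ, f i ^ x i := by
  rw [Fintype.prod_eq_mul_prod_compl m]
  congr 1
  · simp
  · exact prod_congr rfl fun i hi => by
      rw [Function.update_of_ne (by simpa using hi)]

theorem sum_mul_prod_pow_eq_zero_of_forall_lt_card {R ι σ : Type*} [CommRing R] [Nontrivial R]
    [Fintype ι] [Fintype σ] (c : ι → R) (d : ι → σ → R)
    (h : ∀ x : σ → ℕ, (∀ m, x m < Fintype.card ι) → ∑ k, c k * ∏ m, d k m ^ x m = 0)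
    (x : σ → ℕ) : ∑ k, c k * ∏ m, d k m ^ x m = 0 := by
  classical
  suffices ∀ s : Finset σ, ∀ x : σ → ℕ, (∀ m ∉ s, x m < Fintype.card ι) →
      ∑ k, c k * ∏ m, d k m ^ x m = 0 from this univ x (by simp)
  intro s
  induction s using Finset.induction_on with
  | empty => simpa using h
  | insert m s _ ih =>
    intro x hx
    have hfree (n : ℕ) : ∑ k, c k * ∏ i, d k i ^ Function.update x m n i = 0 := by
      have hsplit (n : ℕ) : ∑ k, c k * ∏ i, d k i ^ Function.update x m n i =
          ∑ k, (c k * ∏ i ∈ {m}ᶜ, d k i ^ x i) * d k m ^ n :=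
        sum_congr rfl fun k _ => by rw [prod_pow_update]; ring
      rw [hsplit]
      refine sum_mul_pow_eq_zero_of_forall_lt_card _ _ (fun n hn => ?_) n
      rw [← hsplit]
      refine ih _ fun i hi => ?_
      by_cases him : i = m
      · subst him; simpa using hn
      · simpa [him] using hx i (by simp [him, hi])
    simpa using hfree (x m)

theorem sum_mul_prod_pow_eq_of_forall_lt_card_add_card {R ι κ σ : Type*} [CommRing R]
    [Nontrivial R] [Fintype ι] [Fintype κ] [Fintype σ]
    (a : ι → R) (b : ι → σ → R) (a' : κ → R) (b' : κ → σ → R)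
    (h : ∀ x : σ → ℕ, (∀ m, x m < Fintype.card ι + Fintype.card κ) →
      ∑ k, a k * ∏ m, b k m ^ x m = ∑ k, a' k * ∏ m, b' k m ^ x m)
    (x : σ → ℕ) : ∑ k, a k * ∏ m, b k m ^ x m = ∑ k, a' k * ∏ m, b' k m ^ x m := by
  have hsum (x : σ → ℕ) : ∑ k, Sum.elim a (-a') k * ∏ m, Sum.elim b b' k m ^ x m =
      ∑ k, a k * ∏ m, b k m ^ x m - ∑ k, a' k * ∏ m, b' k m ^ x m := by
    simp [Fintype.sum_sum_type, sub_eq_add_neg]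
  rw [← sub_eq_zero, ← hsum]
  refine sum_mul_prod_pow_eq_zero_of_forall_lt_card _ _ (fun y hy => ?_) x
  rw [hsum, sub_eq_zero]
  exact h y (by simpa using hy)

theorem statement7_general (H Hstar M : ℕ)
    (a : Fin H → ℝ) (astar : Fin Hstar → ℝ)
    (b : Fin H → Fin M → ℝ) (bstar : Fin Hstar → Fin M → ℝ)
    (hyp : ∀ x : Fin M → ℕ, (∀ m, x m < H + Hstar) →
      ∑ k, a k * ∏ m, b k m ^ (x m) = ∑ k, astar k * ∏ m, bstar k m ^ (x m)) :
    ∀ x : Fin M → ℕ,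
      ∑ k, a k * ∏ m, b k m ^ (x m) = ∑ k, astar k * ∏ m, bstar k m ^ (x m) :=
  sum_mul_prod_pow_eq_of_forall_lt_card_add_card a b astar bstar (by simpa using hyp)

theorem statement7 (H Hstar M : ℕ)
    (a : Fin H → ℝ) (astar : Fin Hstar → ℝ)
    (b : Fin H → Fin M → ℝ) (bstar : Fin Hstar → Fin M → ℝ)
    (hb : ∀ k m, 0 < b k m) (hbstar : ∀ k m, 0 < bstar k m)
    (hyp : ∀ x : Fin M → ℕ, (∀ m, x m < H + Hstar) →
      ∑ k, a k * ∏ m, b k m ^ (x m) = ∑ k, astar k * ∏ m, bstar k m ^ (x m)) :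
    ∀ x : Fin M → ℕ,
      ∑ k, a k * ∏ m, b k m ^ (x m) = ∑ k, astar k * ∏ m, bstar k m ^ (x m) :=
  statement7_general H Hstar M a astar b bstar hyp
end

section
/- Let N ∈ ℕ, let c_1,…,c_N ∈ ℝ, let b_1,…,b_N ∈ ℝ satisfy ∏_{i=1}^{N} (1+|b_i|) ≤ R/N for a constant R ≥ 1, and set f_n := ∑_{k=1}^{N} c_k b_k^n for n ∈ ℤ_{≥0}. Then ∑_{n=0}^{∞} (f_n/n!)² ≤ N e^{2R} ∑_{i=0}^{N−1} f_i². -/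
/-!
The power sums `f n = ∑ k, c k * b k ^ n` satisfy the linear recurrence whose characteristic
polynomial is `∏ k, (X - b k)`, and the coefficients of that polynomial have absolute sum at most
`Q = ∏ k, (1 + |b k|)`. By induction `|f n| ≤ M * Q ^ n` with `M ^ 2 = ∑ i < N, f i ^ 2`, so
`(f n / n!) ^ 2 ≤ M ^ 2 * e ^ Q * Q ^ n / n!`, which sums to `M ^ 2 * e ^ (2 * Q)`.
Finally `Q ≤ R / N ≤ R`.
-/

open Polynomial Finset

lemma sum_range_abs_coeff_prod_X_sub_C_le {ι : Type*} (s : Finset ι) (b : ι → ℝ) :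
    ∑ j ∈ range (#s + 1), |(∏ i ∈ s, (X - C (b i))).coeff j| ≤
      ∏ i ∈ s, (1 + |b i|) := by
  induction s using Finset.cons_induction with
  | empty => simp
  | cons a s ha ih =>
    set p : ℝ[X] := ∏ i ∈ s, (X - C (b i))
    have hp : p.coeff (#s + 1) = 0 := coeff_eq_zero_of_natDegree_lt (by simp [p])
    rw [prod_cons, prod_cons, card_cons]
    calc ∑ j ∈ range (#s + 1 + 1), |((X - C (b a)) * p).coeff j|
        = ∑ j ∈ range (#s + 1 + 1), |(X * p).coeff j - b a * p.coeff j| := by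
          simp only [sub_mul, coeff_sub, coeff_C_mul]
      _ ≤ ∑ j ∈ range (#s + 1 + 1), (|(X * p).coeff j| + |b a| * |p.coeff j|) := by
          gcongr with j
          exact (abs_sub _ _).trans_eq (by rw [abs_mul])
      _ = (1 + |b a|) * ∑ j ∈ range (#s + 1), |p.coeff j| := by
          rw [sum_add_distrib, ← mul_sum, sum_range_succ', sum_range_succ _ (#s + 1)]
          simp [coeff_X_mul, hp]
          ring
      _ ≤ (1 + |b a|) * ∏ i ∈ s, (1 + |b i|) := by gcongr

lemma sum_coeff_mul_powerSum_eq_zero {ι A : Type*} [Fintype ι] [CommSemiring A] (p : A[X])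
    (c b : ι → A) (hp : ∀ k, p.eval (b k) = 0) (m : ℕ) :
    ∑ j ∈ range (p.natDegree + 1), p.coeff j * ∑ k, c k * b k ^ (m + j) = 0 := by
  simp_rw [mul_sum]
  rw [sum_comm]
  refine sum_eq_zero fun k _ => ?_
  calc ∑ j ∈ range (p.natDegree + 1), p.coeff j * (c k * b k ^ (m + j))
      = c k * b k ^ m * p.eval (b k) := by
        rw [eval_eq_sum_range, mul_sum]
        refine sum_congr rfl fun j _ => ?_
        ring
    _ = 0 := by rw [hp k, mul_zero]

lemma sum_range_card_abs_coeff_prod_X_sub_C_le {ι : Type*} (s : Finset ι) (b : ι → ℝ) :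
    ∑ j ∈ range #s, |(∏ i ∈ s, (X - C (b i))).coeff j| ≤
      ∏ i ∈ s, (1 + |b i|) - 1 := by
  have hlead := (monic_prod_X_sub_C b s).coeff_natDegree
  rw [natDegree_finsetProd_X_sub_C_eq_card] at hlead
  have := sum_range_abs_coeff_prod_X_sub_C_le s b
  rw [sum_range_succ, hlead, abs_one] at this
  linarith

lemma powerSum_add_sum_coeff_prod_X_sub_C_mul_eq_zero {ι A : Type*} [Fintype ι] [CommRing A]
    [Nontrivial A] (c b : ι → A) (m : ℕ) :
    ∑ k, c k * b k ^ (m + Fintype.card ι) +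
      ∑ j ∈ range (Fintype.card ι), (∏ i, (X - C (b i))).coeff j * ∑ k, c k * b k ^ (m + j)
      = 0 := by
  have hroots (k : ι) : (∏ i, (X - C (b i))).eval (b k) = 0 := by
    simp [eval_prod, prod_eq_zero (mem_univ k)]
  have hlead := (monic_prod_X_sub_C b univ).coeff_natDegree
  have := sum_coeff_mul_powerSum_eq_zero _ c b hroots m
  rwa [sum_range_succ, add_comm, hlead, one_mul, natDegree_finsetProd_X_sub_C_eq_card,
    card_univ] at this

lemma abs_le_mul_pow_of_linear_recurrence {N : ℕ} {a f : ℕ → ℝ} {M Q : ℝ} (hM : 0 ≤ M)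
    (ha : ∑ j ∈ range N, |a j| ≤ Q - 1)
    (hrec : ∀ m, f (m + N) + ∑ j ∈ range N, a j * f (m + j) = 0)
    (hinit : ∀ i < N, |f i| ≤ M) (n : ℕ) : |f n| ≤ M * Q ^ n := by
  have hQ : 1 ≤ Q := by
    linarith [(sum_nonneg fun j _ => abs_nonneg (a j) : 0 ≤ ∑ j ∈ range N, |a j|)]
  rcases Nat.eq_zero_or_pos N with rfl | hN
  · have : f n = 0 := by simpa using hrec n
    rw [this, abs_zero]
    positivity
  induction n using Nat.strong_induction_on with
  | _ n ih =>
  rcases lt_or_ge n N with hn | hn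
  · exact (hinit n hn).trans (le_mul_of_one_le_right hM (one_le_pow₀ hQ))
  obtain ⟨m, rfl⟩ := Nat.exists_eq_add_of_le' hn
  rw [eq_neg_of_add_eq_zero_left (hrec m), abs_neg]
  calc |∑ j ∈ range N, a j * f (m + j)|
      ≤ ∑ j ∈ range N, |a j| * |f (m + j)| := by
        simpa only [abs_mul] using abs_sum_le_sum_abs (fun j => a j * f (m + j)) (range N)
    _ ≤ ∑ j ∈ range N, |a j| * (M * Q ^ (m + N - 1)) := by
        gcongr with j hj
        have hjN : j < N := mem_range.1 hj
        exact (ih _ (by omega)).trans (by gcongr; omega)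
    _ ≤ Q * (M * Q ^ (m + N - 1)) := by
        rw [← sum_mul]
        gcongr
        linarith
    _ = M * Q ^ (m + N) := by
        rw [mul_left_comm, ← pow_succ']
        congr 2
        omega

lemma sq_div_factorial_le_mul_exp {g M Q : ℝ} (hQ : 0 ≤ Q) {n : ℕ} (hg : |g| ≤ M * Q ^ n) :
    (g / n.factorial) ^ 2 ≤ M ^ 2 * Real.exp Q * (Q ^ n / n.factorial) := by
  calc (g / n.factorial) ^ 2 = (|g| / n.factorial) ^ 2 := by rw [div_pow, div_pow, sq_abs]
    _ ≤ (M * Q ^ n / n.factorial) ^ 2 := by gcongr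
    _ = M ^ 2 * (Q ^ n / n.factorial) * (Q ^ n / n.factorial) := by ring
    _ ≤ M ^ 2 * Real.exp Q * (Q ^ n / n.factorial) := by
        gcongr
        exact Real.pow_div_factorial_le_exp _ hQ n

lemma summable_sq_div_factorial_and_tsum_le {f : ℕ → ℝ} {M Q : ℝ} (hQ : 0 ≤ Q)
    (hf : ∀ n, |f n| ≤ M * Q ^ n) :
    Summable (fun n => (f n / n.factorial) ^ 2) ∧
      ∑' n, (f n / n.factorial) ^ 2 ≤ M ^ 2 * Real.exp (2 * Q) := by
  have hexp : HasSum (fun n => Q ^ n / n.factorial) (Real.exp Q) := by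
    rw [Real.exp_eq_exp_ℝ]
    exact NormedSpace.expSeries_div_hasSum_exp Q
  have hbound := hexp.mul_left (M ^ 2 * Real.exp Q)
  have hle n := sq_div_factorial_le_mul_exp hQ (hf n)
  have hsum : Summable (fun n => (f n / n.factorial) ^ 2) :=
    hbound.summable.of_nonneg_of_le (fun _ => sq_nonneg _) hle
  refine ⟨hsum, (hasSum_le hle hsum.hasSum hbound).trans_eq ?_⟩
  rw [two_mul, Real.exp_add]
  ring

theorem statement9_general (N : ℕ) (c b : Fin N → ℝ) (R : ℝ)
    (hb : ∏ i, (1 + |b i|) ≤ R / N) :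
    Summable (fun n : ℕ => ((∑ k, c k * b k ^ n) / (Nat.factorial n : ℝ)) ^ 2) ∧
    ∑' n : ℕ, ((∑ k, c k * b k ^ n) / (Nat.factorial n : ℝ)) ^ 2
      ≤ N * Real.exp (2 * R) * ∑ i ∈ Finset.range N, (∑ k, c k * b k ^ i) ^ 2 := by
  set f : ℕ → ℝ := fun n => ∑ k, c k * b k ^ n
  set S := ∑ i ∈ range N, f i ^ 2
  set Q := ∏ i, (1 + |b i|)
  have hQ : 1 ≤ Q := one_le_prod fun i _ => le_add_of_nonneg_right (abs_nonneg _)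
  have hN : 0 < N := Nat.pos_of_ne_zero (by rintro rfl; norm_num [Q] at hb)
  have hNR : (N : ℝ) ≤ R := by simpa using (le_div_iff₀ (by positivity)).1 (hQ.trans hb)
  have hQR : Q ≤ R := hb.trans (div_le_self (by linarith) (by exact_mod_cast hN))
  have hcoeff := sum_range_card_abs_coeff_prod_X_sub_C_le univ b
  have hrec := powerSum_add_sum_coeff_prod_X_sub_C_mul_eq_zero c b
  simp only [card_univ, Fintype.card_fin] at hcoeff hrec
  have hgrowth := abs_le_mul_pow_of_linear_recurrence (Real.sqrt_nonneg S) hcoeff hrec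
    fun i hi => Real.abs_le_sqrt (single_le_sum (fun j _ => sq_nonneg (f j)) (mem_range.2 hi))
  obtain ⟨hsum, htsum⟩ := summable_sq_div_factorial_and_tsum_le (by linarith) hgrowth
  refine ⟨hsum, htsum.trans ?_⟩
  have hS : 0 ≤ S := sum_nonneg fun _ _ => sq_nonneg _
  calc √S ^ 2 * Real.exp (2 * Q) = 1 * Real.exp (2 * Q) * S := by
        rw [Real.sq_sqrt hS]
        ring
    _ ≤ N * Real.exp (2 * R) * S := by gcongr; exact_mod_cast hN

theorem statement9 (N : ℕ) (c b : Fin N → ℝ) (R : ℝ) (hR : 1 ≤ R)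
    (hb : ∏ i, (1 + |b i|) ≤ R / N) :
    Summable (fun n : ℕ => ((∑ k, c k * b k ^ n) / (Nat.factorial n : ℝ)) ^ 2) ∧
    ∑' n : ℕ, ((∑ k, c k * b k ^ n) / (Nat.factorial n : ℝ)) ^ 2
      ≤ N * Real.exp (2 * R) * ∑ i ∈ Finset.range N, (∑ k, c k * b k ^ i) ^ 2 :=
  statement9_general N c b R hb
end

section
/- Fix a*_1,…,a*_{H*} > 0 with ∑_k a*_k = 1 and fixed b*_1,…,b*_{H*} > 0. For a parameter w = (a_1,…,a_H, b_1,…,b_H) with a_k ≥ 0, ∑_{k=1}^{H} a_k = 1, and b_k ∈ [β₁,β₂] (0 < β₁ ≤ β₂), define K(w) = ∑_{x=0}^{∞} ( ∑_{k=1}^{H} a_k e^{−b_k} b_k^x/x! − ∑_{k=1}^{H*} a*_k e^{−b*_k} (b*_k)^x/x! )² and H'(w) = ∑_{x=0}^{H+H*−1} ( ∑_{k=1}^{H} a_k e^{−b_k} b_k^x − ∑_{k=1}^{H*} a*_k e^{−b*_k} (b*_k)^x )². Then there exist constants C_1, C_2 > 0 such that C_1 H'(w) ≤ K(w) ≤ C_2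 H'(w) for all such w. -/
/-!
Both mixtures together give the sequence f(x) = ∑ⱼ cⱼ μⱼˣ over the N = H + H* atoms μ = (b, b*),
with K = ∑ₓ (f(x)/x!)² and H' = ∑_{x<N} f(x)². The sequence f satisfies the linear recurrence
whose characteristic polynomial is ∏ⱼ (X - μⱼ); its coefficients are bounded by (1 + B)ᴺ when all
|μⱼ| ≤ B, so |f(x)| ≤ rˣ √H' with r depending only on N and B. Hence K ≤ exp(r²) H', while the
first N terms of K alone give K ≥ H' / (N!)².
-/

open Finset Polynomial Nat

theorem abs_coeff_prod_X_sub_C_le {ι : Type*} (s : Finset ι) (r : ι → ℝ) {B : ℝ}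
    (hr : ∀ j ∈ s, |r j| ≤ B) (i : ℕ) :
    |(∏ j ∈ s, (X - C (r j))).coeff i| ≤ (1 + B) ^ s.card := by
  induction s using Finset.cons_induction generalizing i with
  | empty => by_cases hi : i = 0 <;> simp [coeff_one, hi]
  | cons a s _ ih =>
    have hra : |r a| ≤ B := hr a (mem_cons_self a s)
    have ih' (i : ℕ) : |(∏ j ∈ s, (X - C (r j))).coeff i| ≤ (1 + B) ^ s.card :=
      ih (fun j hj => hr j (mem_cons_of_mem hj)) i
    have hX : |(X * ∏ j ∈ s, (X - C (r j))).coeff i| ≤ (1 + B) ^ s.card := by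
      cases i with
      | zero =>
        rw [coeff_X_mul_zero, abs_zero]
        exact pow_nonneg (by linarith [abs_nonneg (r a)]) _
      | succ n => rw [coeff_X_mul]; exact ih' n
    rw [prod_cons, card_cons, sub_mul, coeff_sub, coeff_C_mul, pow_succ]
    calc _ ≤ |(X * ∏ j ∈ s, (X - C (r j))).coeff i|
          + |r a| * |(∏ j ∈ s, (X - C (r j))).coeff i| := by
          rw [← abs_mul]; exact abs_sub _ _
      _ ≤ (1 + B) ^ s.card + B * (1 + B) ^ s.card := by
          gcongr
          exacts [(abs_nonneg _).trans hra, ih' i]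
      _ = (1 + B) ^ s.card * (1 + B) := by ring

theorem abs_le_pow_mul_of_abs_le_mul_sum {f : ℕ → ℝ} {N : ℕ} {A G r : ℝ} (hA : 0 ≤ A)
    (hG : 0 ≤ G) (hr : 1 ≤ r) (hAr : N * A ≤ r) (hinit : ∀ x < N, |f x| ≤ G)
    (hrec : ∀ m, |f (m + N)| ≤ A * ∑ i ∈ range N, |f (m + i)|) (n : ℕ) :
    |f n| ≤ r ^ n * G := by
  induction n using Nat.strong_induction_on with
  | _ n ih =>
    rcases lt_or_ge n N with hn | hn
    · exact (hinit n hn).trans (le_mul_of_one_le_left hG (one_le_pow₀ hr))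
    obtain ⟨m, rfl⟩ : ∃ m, n = m + N := ⟨n - N, by omega⟩
    have key : r * |f (m + N)| ≤ r * (r ^ (m + N) * G) := calc
      r * |f (m + N)| ≤ r * (A * ∑ i ∈ range N, |f (m + i)|) := by gcongr; exact hrec m
      _ ≤ r * (A * ∑ i ∈ range N, r ^ (m + i) * G) := by
          gcongr with i hi
          exact ih _ (by have := mem_range.1 hi; omega)
      _ = A * ∑ i ∈ range N, r ^ (m + i + 1) * G := by
          simp only [mul_sum, pow_succ]; exact sum_congr rfl fun i _ => by ring
      _ ≤ A * ∑ _i ∈ range N, r ^ (m + N) * G := by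
          refine mul_le_mul_of_nonneg_left (sum_le_sum fun i hi => ?_) hA
          gcongr ?_ * G
          exact pow_le_pow_right₀ hr (by have := mem_range.1 hi; omega)
      _ = N * A * (r ^ (m + N) * G) := by rw [sum_const, card_range, nsmul_eq_mul]; ring
      _ ≤ r * (r ^ (m + N) * G) := by gcongr
    exact le_of_mul_le_mul_left key (by linarith)

section WeightedPowerSum

variable {ι : Type*} [Fintype ι]

def weightedPowerSum (c μ : ι → ℝ) (x : ℕ) : ℝ := ∑ j, c j * μ j ^ x

theorem sum_coeff_mul_weightedPowerSum_eq_zero (c μ : ι → ℝ) {p : ℝ[X]}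
    (hp : ∀ j, p.eval (μ j) = 0) (m : ℕ) :
    ∑ i ∈ range (p.natDegree + 1), p.coeff i * weightedPowerSum c μ (m + i) = 0 := by
  calc _ = ∑ j, c j * μ j ^ m * p.eval (μ j) := by
        simp only [weightedPowerSum, eval_eq_sum_range, mul_sum, pow_add]
        rw [sum_comm]
        exact sum_congr rfl fun j _ => sum_congr rfl fun i _ => by ring
    _ = 0 := by simp [hp]

theorem abs_weightedPowerSum_le (c μ : ι → ℝ) {B : ℝ} (hB : 0 ≤ B) (hμ : ∀ j, |μ j| ≤ B)
    (n : ℕ) :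
    |weightedPowerSum c μ n| ≤ (Fintype.card ι * (1 + B) ^ Fintype.card ι + 1) ^ n *
      √(∑ x ∈ range (Fintype.card ι), weightedPowerSum c μ x ^ 2) := by
  set N := Fintype.card ι
  set p : ℝ[X] := ∏ j, (X - C (μ j))
  have hmonic : p.Monic := monic_prod_of_monic _ _ fun j _ => monic_X_sub_C (μ j)
  have hdeg : p.natDegree = N := by
    simp [p, N, natDegree_prod_of_monic _ _ fun j _ => monic_X_sub_C (μ j)]
  have hcoeff (i : ℕ) : |p.coeff i| ≤ (1 + B) ^ N :=
    abs_coeff_prod_X_sub_C_le _ μ (fun j _ => hμ j) i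
  refine abs_le_pow_mul_of_abs_le_mul_sum (N := N) (A := (1 + B) ^ N) (by positivity)
    (Real.sqrt_nonneg _) (le_add_of_nonneg_left (by positivity)) (by linarith)
    (fun x hx => ?_) (fun m => ?_) n
  · rw [← Real.sqrt_sq_eq_abs]
    exact Real.sqrt_le_sqrt (single_le_sum (fun i _ => sq_nonneg _) (mem_range.2 hx))
  · have hrec := sum_coeff_mul_weightedPowerSum_eq_zero c μ
      (p := p) (fun j => by simp [p, eval_prod, prod_eq_zero (mem_univ j)]) m
    rw [hdeg, sum_range_succ, ← hdeg, hmonic.coeff_natDegree, hdeg, one_mul,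
      add_eq_zero_iff_eq_neg'] at hrec
    rw [hrec, abs_neg, mul_sum]
    refine (abs_sum_le_sum_abs _ _).trans (sum_le_sum fun i _ => ?_)
    rw [abs_mul]
    gcongr
    exact hcoeff i

end WeightedPowerSum

theorem sq_div_factorial_le_of_abs_le {y r G : ℝ} {x : ℕ} (hy : |y| ≤ r ^ x * G) :
    (y / x !) ^ 2 ≤ G ^ 2 * ((r ^ 2) ^ x / x !) := by
  have hfact : (1 : ℝ) ≤ x ! := mod_cast x.factorial_pos
  calc (y / x !) ^ 2 = |y| ^ 2 / (x ! : ℝ) ^ 2 := by rw [div_pow, sq_abs]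
    _ ≤ (r ^ x * G) ^ 2 / x ! := by
        gcongr
        exact le_self_pow₀ hfact two_ne_zero
    _ = G ^ 2 * ((r ^ 2) ^ x / x !) := by ring

theorem tsum_sq_div_factorial_le {f : ℕ → ℝ} {r G : ℝ} (hf : ∀ x, |f x| ≤ r ^ x * G) :
    Summable (fun x => (f x / x !) ^ 2) ∧ ∑' x, (f x / x !) ^ 2 ≤ G ^ 2 * Real.exp (r ^ 2) := by
  have hexp : HasSum (fun x : ℕ => G ^ 2 * ((r ^ 2) ^ x / x !)) (G ^ 2 * Real.exp (r ^ 2)) := by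
    rw [Real.exp_eq_exp_ℝ]
    exact (NormedSpace.expSeries_div_hasSum_exp (r ^ 2)).mul_left _
  have hle (x : ℕ) := sq_div_factorial_le_of_abs_le (hf x)
  have hsum : Summable (fun x => (f x / x !) ^ 2) :=
    hexp.summable.of_nonneg_of_le (fun _ => sq_nonneg _) hle
  exact ⟨hsum, hexp.tsum_eq ▸ hsum.tsum_le_tsum hle hexp.summable⟩

theorem sum_range_sq_le_tsum_sq_div_factorial {f : ℕ → ℝ}
    (hf : Summable (fun x => (f x / x !) ^ 2)) (N : ℕ) :
    ((N ! : ℝ) ^ 2)⁻¹ * ∑ x ∈ range N, f x ^ 2 ≤ ∑' x, (f x / x !) ^ 2 := by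
  rw [mul_sum]
  refine (sum_le_sum fun x hx => ?_).trans (hf.sum_le_tsum _ fun _ _ => sq_nonneg _)
  rw [div_pow, div_eq_inv_mul]
  gcongr
  exact (mem_range.1 hx).le

theorem exists_bounds_tsum_sq_weightedPowerSum_div_factorial (ι : Type*) [Fintype ι] {B : ℝ}
    (hB : 0 ≤ B) :
    ∃ C₁ > (0 : ℝ), ∃ C₂ > (0 : ℝ), ∀ c μ : ι → ℝ, (∀ j, |μ j| ≤ B) →
      C₁ * ∑ x ∈ range (Fintype.card ι), weightedPowerSum c μ x ^ 2
          ≤ ∑' x, (weightedPowerSum c μ x / x !) ^ 2 ∧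
        ∑' x, (weightedPowerSum c μ x / x !) ^ 2
          ≤ C₂ * ∑ x ∈ range (Fintype.card ι), weightedPowerSum c μ x ^ 2 := by
  set N := Fintype.card ι
  set r : ℝ := N * (1 + B) ^ N + 1
  refine ⟨((N ! : ℝ) ^ 2)⁻¹, by positivity, Real.exp (r ^ 2), Real.exp_pos _, fun c μ hμ => ?_⟩
  obtain ⟨hsum, hle⟩ := tsum_sq_div_factorial_le (abs_weightedPowerSum_le c μ hB hμ)
  refine ⟨sum_range_sq_le_tsum_sq_div_factorial hsum N, hle.trans_eq ?_⟩
  rw [Real.sq_sqrt (sum_nonneg fun _ _ => sq_nonneg _), mul_comm]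

theorem statement10_general (H Hstar : ℕ)
    (astar bstar : Fin Hstar → ℝ)
    (β₁ β₂ : ℝ) :
    ∃ C₁ > (0 : ℝ), ∃ C₂ > (0 : ℝ),
      ∀ (a b : Fin H → ℝ),
        (∀ k, 0 ≤ a k) → (∑ k, a k = 1) → (∀ k, b k ∈ Set.Icc β₁ β₂) →
        C₁ * (∑ x ∈ Finset.range (H + Hstar),
                (∑ k, a k * Real.exp (-(b k)) * b k ^ x
                  - ∑ k, astar k * Real.exp (-(bstar k)) * bstar k ^ x) ^ 2)
          ≤ (∑' x : ℕ,
              (∑ k, a k * Real.exp (-(b k)) * b k ^ x / (Nat.factorial x : ℝ)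
                - ∑ k, astar k * Real.exp (-(bstar k)) * bstar k ^ x / (Nat.factorial x : ℝ)) ^ 2) ∧
        (∑' x : ℕ,
            (∑ k, a k * Real.exp (-(b k)) * b k ^ x / (Nat.factorial x : ℝ)
              - ∑ k, astar k * Real.exp (-(bstar k)) * bstar k ^ x / (Nat.factorial x : ℝ)) ^ 2)
          ≤ C₂ * (∑ x ∈ Finset.range (H + Hstar),
                (∑ k, a k * Real.exp (-(b k)) * b k ^ x
                  - ∑ k, astar k * Real.exp (-(bstar k)) * bstar k ^ x) ^ 2) := by
  obtain ⟨C₁, hC₁, C₂, hC₂, hbounds⟩ := exists_bounds_tsum_sq_weightedPowerSum_div_factorial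
    (Fin H ⊕ Fin Hstar) (B := |β₁| + |β₂| + ∑ k, |bstar k|) (by positivity)
  refine ⟨C₁, hC₁, C₂, hC₂, fun a b _ _ hb => ?_⟩
  have hμ : ∀ j, |Sum.elim b bstar j| ≤ |β₁| + |β₂| + ∑ k, |bstar k| := by
    rintro (k | k)
    · have := abs_le_max_abs_abs (hb k).1 (hb k).2
      have := max_le_add_of_nonneg (abs_nonneg β₁) (abs_nonneg β₂)
      simp only [Sum.elim_inl]
      linarith [sum_nonneg fun k (_ : k ∈ univ) => abs_nonneg (bstar k)]
    · have := single_le_sum (fun k _ => abs_nonneg (bstar k)) (mem_univ k)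
      simp only [Sum.elim_inr]
      linarith [abs_nonneg β₁, abs_nonneg β₂]
  set c : Fin H ⊕ Fin Hstar → ℝ :=
    Sum.elim (fun k => a k * Real.exp (-(b k))) fun k => -(astar k * Real.exp (-(bstar k)))
  have hf (x : ℕ) : weightedPowerSum c (Sum.elim b bstar) x
      = ∑ k, a k * Real.exp (-(b k)) * b k ^ x
        - ∑ k, astar k * Real.exp (-(bstar k)) * bstar k ^ x := by
    simp [c, weightedPowerSum, Fintype.sum_sum_type, sub_eq_add_neg]
  simpa only [Fintype.card_sum, Fintype.card_fin, hf, sub_div, sum_div] using hbounds c _ hμ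

theorem statement10 (H Hstar : ℕ)
    (astar bstar : Fin Hstar → ℝ)
    (hastar : ∀ k, 0 < astar k) (hastarsum : ∑ k, astar k = 1)
    (hbstar : ∀ k, 0 < bstar k)
    (β₁ β₂ : ℝ) (hβ₁ : 0 < β₁) (hβ : β₁ ≤ β₂) :
    ∃ C₁ > (0 : ℝ), ∃ C₂ > (0 : ℝ),
      ∀ (a b : Fin H → ℝ),
        (∀ k, 0 ≤ a k) → (∑ k, a k = 1) → (∀ k, b k ∈ Set.Icc β₁ β₂) →
        C₁ * (∑ x ∈ Finset.range (H + Hstar),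
                (∑ k, a k * Real.exp (-(b k)) * b k ^ x
                  - ∑ k, astar k * Real.exp (-(bstar k)) * bstar k ^ x) ^ 2)
          ≤ (∑' x : ℕ,
              (∑ k, a k * Real.exp (-(b k)) * b k ^ x / (Nat.factorial x : ℝ)
                - ∑ k, astar k * Real.exp (-(bstar k)) * bstar k ^ x / (Nat.factorial x : ℝ)) ^ 2) ∧
        (∑' x : ℕ,
            (∑ k, a k * Real.exp (-(b k)) * b k ^ x / (Nat.factorial x : ℝ)
              - ∑ k, astar k * Real.exp (-(bstar k)) * bstar k ^ x / (Nat.factorial x : ℝ)) ^ 2)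
          ≤ C₂ * (∑ x ∈ Finset.range (H + Hstar),
                (∑ k, a k * Real.exp (-(b k)) * b k ^ x
                  - ∑ k, astar k * Real.exp (-(bstar k)) * bstar k ^ x) ^ 2) :=
  statement10_general H Hstar astar bstar β₁ β₂
end

section
/- Let a_1,…,a_H, a*_1,…,a*_{H*} ∈ ℝ and b_1,…,b_H, b*_1,…,b*_{H*} ∈ ℝ_{>0}. Define f_n := ∑_{k=1}^{H} a_k b_k^n − ∑_{k=1}^{H*} a*_k (b*_k)^n and g_n := ∑_{k=1}^{H} a_k b_k^n e^{−b_k} − ∑_{k=1}^{H*} a*_k (b*_k)^n e^{−b*_k} for n ∈ ℤ_{≥0}. Then for every n ∈ ℤ_{≥0}, the series ∑_{j=n}^{∞} g_j/(j−n)! converges and f_n = ∑_{j=n}^{∞} g_j/(j−n)!. -/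
/-! Each term is the exponential series in disguise:
`∑ₛ bⁿ⁺ˢ e^{-b} / s! = bⁿ e^{-b} e^{b} = bⁿ`, and everything else is linearity of `HasSum`. -/

open Finset

lemma hasSum_pow_add_mul_exp_neg_div_factorial (b : ℝ) (n : ℕ) :
    HasSum (fun s : ℕ => b ^ (n + s) * Real.exp (-b) / s.factorial) (b ^ n) := by
  have hexp : HasSum (fun s : ℕ => b ^ s / s.factorial) (Real.exp b) := by
    rw [Real.exp_eq_exp_ℝ]
    exact NormedSpace.expSeries_div_hasSum_exp b
  have h := hexp.mul_left (b ^ n * Real.exp (-b))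
  rw [mul_assoc, ← Real.exp_add, neg_add_cancel, Real.exp_zero, mul_one] at h
  have hterm : (fun s : ℕ => b ^ n * Real.exp (-b) * (b ^ s / s.factorial))
      = fun s : ℕ => b ^ (n + s) * Real.exp (-b) / s.factorial := by
    ext s
    rw [pow_add]
    ring
  rwa [hterm] at h

lemma hasSum_weighted_powerSum_div_factorial {ι : Type*} [Fintype ι] (a b : ι → ℝ) (n : ℕ) :
    HasSum (fun s : ℕ => (∑ k, a k * b k ^ (n + s) * Real.exp (-(b k))) / s.factorial)
      (∑ k, a k * b k ^ n) := by
  have hsum := hasSum_sum fun k (_ : k ∈ univ) =>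
    (hasSum_pow_add_mul_exp_neg_div_factorial (b k) n).mul_left (a k)
  simpa only [← mul_div_assoc, ← mul_assoc, ← sum_div] using hsum

theorem statement13_general (H Hstar : ℕ)
    (a : Fin H → ℝ) (astar : Fin Hstar → ℝ)
    (b : Fin H → ℝ) (bstar : Fin Hstar → ℝ) :
    ∀ n : ℕ,
      Summable (fun s : ℕ =>
        (∑ k, a k * b k ^ (n + s) * Real.exp (-(b k))
          - ∑ k, astar k * bstar k ^ (n + s) * Real.exp (-(bstar k))) /
          (Nat.factorial s : ℝ)) ∧
      (∑ k, a k * b k ^ n - ∑ k, astar k * bstar k ^ n)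
        = ∑' s : ℕ,
            (∑ k, a k * b k ^ (n + s) * Real.exp (-(b k))
              - ∑ k, astar k * bstar k ^ (n + s) * Real.exp (-(bstar k))) /
              (Nat.factorial s : ℝ) := by
  intro n
  have key := (hasSum_weighted_powerSum_div_factorial a b n).sub
    (hasSum_weighted_powerSum_div_factorial astar bstar n)
  simp only [← sub_div] at key
  exact ⟨key.summable, key.tsum_eq.symm⟩

theorem statement13 (H Hstar : ℕ)
    (a : Fin H → ℝ) (astar : Fin Hstar → ℝ)
    (b : Fin H → ℝ) (bstar : Fin Hstar → ℝ)
    (hb : ∀ k, 0 < b k) (hbstar : ∀ k, 0 < bstar k) :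
    ∀ n : ℕ,
      Summable (fun s : ℕ =>
        (∑ k, a k * b k ^ (n + s) * Real.exp (-(b k))
          - ∑ k, astar k * bstar k ^ (n + s) * Real.exp (-(bstar k))) /
          (Nat.factorial s : ℝ)) ∧
      (∑ k, a k * b k ^ n - ∑ k, astar k * bstar k ^ n)
        = ∑' s : ℕ,
            (∑ k, a k * b k ^ (n + s) * Real.exp (-(b k))
              - ∑ k, astar k * bstar k ^ (n + s) * Real.exp (-(bstar k))) /
              (Nat.factorial s : ℝ) :=
  statement13_general H Hstar a astar b bstar
end

section
/- Let s_1,…,s_H ∈ (ℝ_{>0})^M be pairwise distinct vectors and let c = (c_1,…,c_H) ∈ ℝ^H. If ∑_{k=1}^{H} c_k ∏_{m=1}^{M} s_{k,m}^{x_m} = 0 for every multi-index x ∈ (ℤ_{≥0})^M, then c_k = 0 for all k ∈ {1,…,H}. -/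
/-!
The maps `x ↦ ∏ m, s m ^ x m` are monoid homomorphisms from `(ℕ^M, +)` into `ℝ`, and distinct
vectors `s` give distinct homomorphisms (evaluate at the unit vectors), so Dedekind's lemma on
the linear independence of characters applies.
-/

section MonomialCharacter

variable {ι L : Type*} [Fintype ι] [CommMonoid L]

def monomialChar (s : ι → L) : Multiplicative (ι → ℕ) →* L where
  toFun x := ∏ m, s m ^ x.toAdd m
  map_one' := by simp
  map_mul' x y := by simp [pow_add, Finset.prod_mul_distrib]

@[simp]
theorem monomialChar_apply (s : ι → L) (x : Multiplicative (ι → ℕ)) :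
    monomialChar s x = ∏ m, s m ^ x.toAdd m :=
  rfl

theorem monomialChar_ofAdd_single [DecidableEq ι] (s : ι → L) (m : ι) :
    monomialChar s (.ofAdd (Pi.single m 1)) = s m := by
  simp [Pi.single_apply, pow_ite, Finset.prod_ite_eq']

theorem monomialChar_injective : Function.Injective (monomialChar : (ι → L) → _) := by
  classical
  intro s t hst
  funext m
  simpa only [monomialChar_ofAdd_single] using DFunLike.congr_fun hst (.ofAdd (Pi.single m 1))

end MonomialCharacter

theorem linearIndependent_monomialChar {κ ι L : Type*} [Fintype ι] [CommRing L] [IsDomain L]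
    {s : κ → ι → L} (hs : Function.Injective s) :
    LinearIndependent L (fun k => ⇑(monomialChar (s k))) :=
  (linearIndependent_monoidHom _ L).comp _ (monomialChar_injective.comp hs)

theorem statement16_general (H M : ℕ) (s : Fin H → Fin M → ℝ)
    (hdist : Function.Injective s)
    (c : Fin H → ℝ)
    (hzero : ∀ x : Fin M → ℕ, ∑ k, c k * ∏ m, s k m ^ (x m) = 0) :
    ∀ k, c k = 0 := by
  have hli := linearIndependent_monomialChar hdist
  refine Fintype.linearIndependent_iff.mp hli c ?_
  funext x
  simp only [Finset.sum_apply, Pi.smul_apply, smul_eq_mul, monomialChar_apply, Pi.zero_apply]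
  exact hzero x.toAdd

theorem statement16 (H M : ℕ) (s : Fin H → Fin M → ℝ)
    (hpos : ∀ k m, 0 < s k m) (hdist : Function.Injective s)
    (c : Fin H → ℝ)
    (hzero : ∀ x : Fin M → ℕ, ∑ k, c k * ∏ m, s k m ^ (x m) = 0) :
    ∀ k, c k = 0 :=
  statement16_general H M s hdist c hzero
end

section
/- Fix a* > 0 and b* > 0. Define, for a parameter w = (a_1,…,a_H, b_1,…,b_H) with a_i ≥ 0 and b_i > 0, F(w) := ∑_{x=0}^{H} ( ∑_{i=1}^{H} a_i b_i^{x} − a^* (b^*)^{x} )² and G(w) := ( ∑_{i=1}^{H} a_i − a^* )² + ∑_{i=1}^{H} ( a_i (b_i − b^*)² )² + ( ∑_{i=1}^{H} a_i (b_i − b^*) )². Then there exist an open neighborhood U of the set { w : ∑_i a_i = a^*, b_1 = ⋯ = b_H = b^* } and constants C_1, C_2 > 0 such that C_1 G(w) ≤ F(w) ≤ C_2 G(w) for all w ∈ U with a_i ≥ 0 and b_i > 0. -/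
/-!
`momentLoss (H + 1)` and `idealLoss` are the paper's `F` and `G`; write `E x` for `momentError … x`.
To first order around `b₀`, `E x` is a combination of `E 0 = ∑ a i - a₀`, `∑ a i * (b i - b₀)`,
and a remainder bounded by `∑ a i * (b i - b₀) ^ 2`, whose square is at most `H` times the middle
term of `G` by Cauchy–Schwarz; this gives `F ≤ C₂ G`.
Conversely the generators of `G` are recovered exactly from the first three moments,
`∑ a i * (b i - b₀) = E 1 - b₀ E 0` and `∑ a i * (b i - b₀) ^ 2 = E 2 - 2 b₀ E 1 + b₀ ^ 2 E 0`,
while `∑ (a i * (b i - b₀) ^ 2) ^ 2 ≤ (∑ a i * (b i - b₀) ^ 2) ^ 2` because `a i ≥ 0`.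
For `H = 1`, where `E 2` is not part of `F`, the condition `|b - b₀| ≤ 1` lets
`(a * (b - b₀)) ^ 2` dominate `(a * (b - b₀) ^ 2) ^ 2` instead.
-/

open Finset

theorem abs_pow_sub_pow_sub_deriv_mul_le {t b : ℝ} (h : |t - b| ≤ 1) (n : ℕ) :
    |t ^ n - b ^ n - n * b ^ (n - 1) * (t - b)| ≤ n ^ 2 * (|b| + 1) ^ n * (t - b) ^ 2 := by
  have hM : 1 ≤ |b| + 1 := by linarith [abs_nonneg b]
  have ht : |t| ≤ |b| + 1 := by
    have := abs_sub_abs_le_abs_sub t b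
    linarith
  induction n with
  | zero => simp
  | succ n ih =>
    have key : t ^ (n + 1) - b ^ (n + 1) - ((n + 1 : ℕ) : ℝ) * b ^ (n + 1 - 1) * (t - b)
        = t * (t ^ n - b ^ n - n * b ^ (n - 1) * (t - b)) + n * b ^ (n - 1) * (t - b) ^ 2 := by
      rcases n with _ | n
      · simp
      · simp only [Nat.add_sub_cancel]
        push_cast
        ring
    have hb : |b| ^ (n - 1) ≤ (|b| + 1) ^ (n + 1) :=
      (pow_le_pow_left₀ (abs_nonneg b) (by linarith) _).trans
        (pow_le_pow_right₀ hM (by omega))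
    have hsq : 0 ≤ (t - b) ^ 2 := sq_nonneg _
    rw [key]
    calc _ ≤ (|b| + 1) * (n ^ 2 * (|b| + 1) ^ n * (t - b) ^ 2)
          + n * (|b| + 1) ^ (n + 1) * (t - b) ^ 2 := by
          refine (abs_add_le _ _).trans (add_le_add ?_ ?_)
          · rw [abs_mul]
            exact mul_le_mul ht ih (abs_nonneg _) (by positivity)
          · rw [abs_mul, abs_mul, abs_pow, abs_of_nonneg hsq, Nat.abs_cast]
            gcongr
      _ ≤ ((n + 1 : ℕ) : ℝ) ^ 2 * (|b| + 1) ^ (n + 1) * (t - b) ^ 2 := by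
          have : 0 ≤ (n + 1) * (|b| + 1) ^ (n + 1) * (t - b) ^ 2 := by positivity
          push_cast
          linear_combination this

variable {ι : Type*} [Fintype ι]

def momentError (a b : ι → ℝ) (a₀ b₀ : ℝ) (x : ℕ) : ℝ :=
  ∑ i, a i * b i ^ x - a₀ * b₀ ^ x

def momentLoss (n : ℕ) (a b : ι → ℝ) (a₀ b₀ : ℝ) : ℝ :=
  ∑ x ∈ range n, momentError a b a₀ b₀ x ^ 2

def idealLoss (a b : ι → ℝ) (a₀ b₀ : ℝ) : ℝ :=
  (∑ i, a i - a₀) ^ 2 + ∑ i, (a i * (b i - b₀) ^ 2) ^ 2 + (∑ i, a i * (b i - b₀)) ^ 2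

section Moments

variable (a b : ι → ℝ) (a₀ b₀ : ℝ)

theorem momentError_zero : momentError a b a₀ b₀ 0 = ∑ i, a i - a₀ := by
  simp [momentError]

theorem sum_mul_sub_eq_momentError :
    ∑ i, a i * (b i - b₀) = momentError a b a₀ b₀ 1 - b₀ * momentError a b a₀ b₀ 0 := by
  simp only [momentError, pow_zero, pow_one, mul_one, mul_sub, sum_sub_distrib, ← sum_mul]
  ring

theorem sum_mul_sub_sq_eq_momentError :
    ∑ i, a i * (b i - b₀) ^ 2 = momentError a b a₀ b₀ 2 - 2 * b₀ * momentError a b a₀ b₀ 1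
      + b₀ ^ 2 * momentError a b a₀ b₀ 0 := by
  have : ∀ i, a i * (b i - b₀) ^ 2 = a i * b i ^ 2 - 2 * b₀ * (a i * b i) + b₀ ^ 2 * a i :=
    fun i => by ring
  simp only [momentError, pow_zero, pow_one, mul_one, this, sum_add_distrib, sum_sub_distrib,
    ← mul_sum]
  ring

theorem momentError_eq_taylor (x : ℕ) :
    momentError a b a₀ b₀ x = b₀ ^ x * momentError a b a₀ b₀ 0
      + x * b₀ ^ (x - 1) * ∑ i, a i * (b i - b₀)
      + ∑ i, a i * (b i ^ x - b₀ ^ x - x * b₀ ^ (x - 1) * (b i - b₀)) := by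
  have : ∀ i, a i * (b i ^ x - b₀ ^ x - x * b₀ ^ (x - 1) * (b i - b₀))
      = a i * b i ^ x - b₀ ^ x * a i - x * b₀ ^ (x - 1) * (a i * (b i - b₀)) :=
    fun i => by ring
  simp only [momentError, pow_zero, mul_one, this, sum_sub_distrib, ← mul_sum]
  ring

theorem momentLoss_mono {m n : ℕ} (hmn : m ≤ n) :
    momentLoss m a b a₀ b₀ ≤ momentLoss n a b a₀ b₀ :=
  sum_le_sum_of_subset_of_nonneg (range_subset_range.mpr hmn) fun _ _ _ => sq_nonneg _

theorem momentLoss_nonneg (n : ℕ) : 0 ≤ momentLoss n a b a₀ b₀ :=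
  sum_nonneg fun _ _ => sq_nonneg _

theorem idealLoss_nonneg : 0 ≤ idealLoss a b a₀ b₀ := by
  unfold idealLoss
  positivity

end Moments

section UpperBound

variable {a b : ι → ℝ} {b₀ : ℝ}

theorem abs_sum_mul_taylorRemainder_le (ha : ∀ i, 0 ≤ a i) (hb : ∀ i, |b i - b₀| ≤ 1) (x : ℕ) :
    |∑ i, a i * (b i ^ x - b₀ ^ x - x * b₀ ^ (x - 1) * (b i - b₀))|
      ≤ x ^ 2 * (|b₀| + 1) ^ x * ∑ i, a i * (b i - b₀) ^ 2 := by
  rw [mul_sum]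
  refine (abs_sum_le_sum_abs _ _).trans (sum_le_sum fun i _ => ?_)
  rw [abs_mul, abs_of_nonneg (ha i)]
  linear_combination mul_le_mul_of_nonneg_left (abs_pow_sub_pow_sub_deriv_mul_le (hb i) x) (ha i)

theorem sq_momentError_le_mul_idealLoss (a₀ : ℝ) (ha : ∀ i, 0 ≤ a i) (hb : ∀ i, |b i - b₀| ≤ 1)
    (x : ℕ) :
    momentError a b a₀ b₀ x ^ 2 ≤ 3 * ((b₀ ^ x) ^ 2 + (x * b₀ ^ (x - 1)) ^ 2
      + (x ^ 2 * (|b₀| + 1) ^ x) ^ 2 * Fintype.card ι) * idealLoss a b a₀ b₀ := by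
  set K : ℝ := x ^ 2 * (|b₀| + 1) ^ x
  set ρ := ∑ i, a i * (b i ^ x - b₀ ^ x - x * b₀ ^ (x - 1) * (b i - b₀))
  set e₀ := ∑ i, a i - a₀
  set u := ∑ i, a i * (b i - b₀)
  set v := ∑ i, a i * (b i - b₀) ^ 2
  set T := ∑ i, (a i * (b i - b₀) ^ 2) ^ 2
  have hG : idealLoss a b a₀ b₀ = e₀ ^ 2 + T + u ^ 2 := rfl
  have hT : 0 ≤ T := sum_nonneg fun _ _ => sq_nonneg _
  have hρ : ρ ^ 2 ≤ K ^ 2 * v ^ 2 := by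
    rw [← mul_pow, ← sq_abs ρ]
    exact pow_le_pow_left₀ (abs_nonneg ρ) (abs_sum_mul_taylorRemainder_le ha hb x) 2
  have hv : v ^ 2 ≤ Fintype.card ι * T := by
    simpa using sq_sum_le_card_mul_sum_sq (s := univ) (f := fun i => a i * (b i - b₀) ^ 2)
  have hexp : momentError a b a₀ b₀ x = b₀ ^ x * e₀ + x * b₀ ^ (x - 1) * u + ρ := by
    rw [momentError_eq_taylor, momentError_zero]
  calc momentError a b a₀ b₀ x ^ 2
      ≤ 3 * ((b₀ ^ x * e₀) ^ 2 + (x * b₀ ^ (x - 1) * u) ^ 2 + ρ ^ 2) := by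
        rw [hexp]
        nlinarith [sq_nonneg (b₀ ^ x * e₀ - x * b₀ ^ (x - 1) * u), sq_nonneg (b₀ ^ x * e₀ - ρ),
          sq_nonneg (x * b₀ ^ (x - 1) * u - ρ)]
    _ ≤ 3 * ((b₀ ^ x) ^ 2 * idealLoss a b a₀ b₀ + (x * b₀ ^ (x - 1)) ^ 2 * idealLoss a b a₀ b₀
          + K ^ 2 * (Fintype.card ι * idealLoss a b a₀ b₀)) := by
        rw [mul_pow, mul_pow]
        gcongr
        · rw [hG]; nlinarith [sq_nonneg u]
        · rw [hG]; nlinarith [sq_nonneg e₀]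
        · calc ρ ^ 2 ≤ K ^ 2 * v ^ 2 := hρ
            _ ≤ K ^ 2 * (Fintype.card ι * idealLoss a b a₀ b₀) := by
              gcongr
              exact hv.trans (by rw [hG]; gcongr; nlinarith [sq_nonneg u, sq_nonneg e₀])
    _ = _ := by ring

theorem exists_momentLoss_le_mul_idealLoss (n : ℕ) (b₀ : ℝ) :
    ∃ C > 0, ∀ (a₀ : ℝ) (a b : ι → ℝ), (∀ i, 0 ≤ a i) → (∀ i, |b i - b₀| ≤ 1) →
      momentLoss n a b a₀ b₀ ≤ C * idealLoss a b a₀ b₀ := by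
  set c : ℕ → ℝ := fun x => 3 * ((b₀ ^ x) ^ 2 + (x * b₀ ^ (x - 1)) ^ 2
      + (x ^ 2 * (|b₀| + 1) ^ x) ^ 2 * Fintype.card ι)
  refine ⟨1 + ∑ x ∈ range n, c x, by positivity, fun a₀ a b ha hb => ?_⟩
  calc momentLoss n a b a₀ b₀ ≤ ∑ x ∈ range n, c x * idealLoss a b a₀ b₀ :=
        sum_le_sum fun x _ => sq_momentError_le_mul_idealLoss a₀ ha hb x
    _ = (∑ x ∈ range n, c x) * idealLoss a b a₀ b₀ := by rw [sum_mul]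
    _ ≤ (1 + ∑ x ∈ range n, c x) * idealLoss a b a₀ b₀ :=
        mul_le_mul_of_nonneg_right (le_add_of_nonneg_left zero_le_one) (idealLoss_nonneg a b a₀ b₀)

end UpperBound

section LowerBound

variable {a b : ι → ℝ} (a₀ b₀ : ℝ)

theorem idealLoss_le_of_moments (ha : ∀ i, 0 ≤ a i) :
    idealLoss a b a₀ b₀ ≤ 4 * (1 + b₀ ^ 2) ^ 2
      * (momentError a b a₀ b₀ 0 ^ 2 + momentError a b a₀ b₀ 1 ^ 2
        + momentError a b a₀ b₀ 2 ^ 2) := by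
  have hT := sum_sq_le_sq_sum_of_nonneg (s := univ)
    fun i _ => mul_nonneg (ha i) (sq_nonneg (b i - b₀))
  rw [sum_mul_sub_sq_eq_momentError a b a₀ b₀] at hT
  rw [idealLoss, sum_mul_sub_eq_momentError, ← momentError_zero a b a₀ b₀]
  set e : ℕ → ℝ := momentError a b a₀ b₀
  nlinarith [sq_nonneg (e 2 + 2 * b₀ * e 1), sq_nonneg (e 2 - b₀ ^ 2 * e 0),
    sq_nonneg (2 * b₀ * e 1 + b₀ ^ 2 * e 0), sq_nonneg (e 1 + b₀ * e 0),
    mul_nonneg (sq_nonneg b₀) (sq_nonneg (e 0)),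
    mul_nonneg (sq_nonneg (b₀ ^ 2)) (sq_nonneg (e 0)),
    mul_nonneg (sq_nonneg (b₀ ^ 2)) (sq_nonneg (e 1)),
    mul_nonneg (sq_nonneg (2 * b₀ ^ 2 - 1)) (sq_nonneg (e 1)),
    mul_nonneg (sq_nonneg b₀) (sq_nonneg (e 2)),
    mul_nonneg (sq_nonneg (b₀ ^ 2)) (sq_nonneg (e 2))]

theorem idealLoss_le_of_unique [Unique ι] (hb : ∀ i, |b i - b₀| ≤ 1) :
    idealLoss a b a₀ b₀ ≤ 4 * (1 + b₀ ^ 2) ^ 2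
      * (momentError a b a₀ b₀ 0 ^ 2 + momentError a b a₀ b₀ 1 ^ 2) := by
  have hT : ∑ i, (a i * (b i - b₀) ^ 2) ^ 2 ≤ (∑ i, a i * (b i - b₀)) ^ 2 := by
    simp only [Fintype.sum_unique]
    calc (a default * (b default - b₀) ^ 2) ^ 2
        = (a default * (b default - b₀)) ^ 2 * (b default - b₀) ^ 2 := by ring
      _ ≤ (a default * (b default - b₀)) ^ 2 :=
        mul_le_of_le_one_right (sq_nonneg _) ((sq_le_one_iff_abs_le_one _).mpr (hb default))
  rw [sum_mul_sub_eq_momentError] at hT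
  rw [idealLoss, sum_mul_sub_eq_momentError, ← momentError_zero a b a₀ b₀]
  set e : ℕ → ℝ := momentError a b a₀ b₀
  nlinarith [sq_nonneg (e 1 + b₀ * e 0), mul_nonneg (sq_nonneg b₀) (sq_nonneg (e 0)),
    mul_nonneg (sq_nonneg (b₀ ^ 2)) (sq_nonneg (e 0)),
    mul_nonneg (sq_nonneg b₀) (sq_nonneg (e 1)),
    mul_nonneg (sq_nonneg (b₀ ^ 2)) (sq_nonneg (e 1))]

theorem idealLoss_le_mul_momentLoss {H : ℕ} {a b : Fin H → ℝ} (ha : ∀ i, 0 ≤ a i)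
    (hb : ∀ i, |b i - b₀| ≤ 1) :
    idealLoss a b a₀ b₀ ≤ 4 * (1 + b₀ ^ 2) ^ 2 * momentLoss (H + 1) a b a₀ b₀ := by
  set e : ℕ → ℝ := momentError a b a₀ b₀
  rcases (by omega : H = 0 ∨ H = 1 ∨ 2 ≤ H) with rfl | rfl | hH
  · have hG : idealLoss a b a₀ b₀ = momentLoss 1 a b a₀ b₀ := by
      simp [idealLoss, momentLoss, momentError]
    rw [hG]
    exact le_mul_of_one_le_left (momentLoss_nonneg ..) (by nlinarith [sq_nonneg b₀])
  · have hF : momentLoss 2 a b a₀ b₀ = e 0 ^ 2 + e 1 ^ 2 := by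
      simp [momentLoss, sum_range_succ, e]
    simpa only [hF] using idealLoss_le_of_unique a₀ b₀ hb
  · have hF : e 0 ^ 2 + e 1 ^ 2 + e 2 ^ 2 ≤ momentLoss (H + 1) a b a₀ b₀ := by
      simpa [momentLoss, sum_range_succ, e] using momentLoss_mono a b a₀ b₀ (by omega : 3 ≤ H + 1)
    exact (idealLoss_le_of_moments a₀ b₀ ha).trans (by gcongr)

end LowerBound

theorem statement18_general (H : ℕ) (astar bstar : ℝ) :
    ∃ U : Set ((Fin H → ℝ) × (Fin H → ℝ)),
      IsOpen U ∧
      {w : (Fin H → ℝ) × (Fin H → ℝ) |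
          (∑ i, w.1 i) = astar ∧ ∀ i, w.2 i = bstar} ⊆ U ∧
      ∃ C₁ > (0 : ℝ), ∃ C₂ > (0 : ℝ),
        ∀ w ∈ U, (∀ i, 0 ≤ w.1 i) → (∀ i, 0 < w.2 i) →
          C₁ * ((∑ i, w.1 i - astar) ^ 2
                + (∑ i, (w.1 i * (w.2 i - bstar) ^ 2) ^ 2)
                + (∑ i, w.1 i * (w.2 i - bstar)) ^ 2)
              ≤ ∑ x ∈ Finset.range (H + 1),
                  (∑ i, w.1 i * w.2 i ^ x - astar * bstar ^ x) ^ 2 ∧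
          (∑ x ∈ Finset.range (H + 1),
              (∑ i, w.1 i * w.2 i ^ x - astar * bstar ^ x) ^ 2)
              ≤ C₂ * ((∑ i, w.1 i - astar) ^ 2
                + (∑ i, (w.1 i * (w.2 i - bstar) ^ 2) ^ 2)
                + (∑ i, w.1 i * (w.2 i - bstar)) ^ 2) := by
  obtain ⟨C₂, hC₂, hupper⟩ := exists_momentLoss_le_mul_idealLoss (ι := Fin H) (H + 1) bstar
  set C := 4 * (1 + bstar ^ 2) ^ 2
  have hC : 0 < C := by positivity
  refine ⟨{w | ∀ i, |w.2 i - bstar| < 1}, ?_, ?_, C⁻¹, inv_pos.mpr hC, C₂, hC₂, ?_⟩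
  · simp only [Set.ofPred_forall]
    exact isOpen_iInter_of_finite fun i => isOpen_lt (by fun_prop) continuous_const
  · rintro w ⟨-, hw⟩ i
    simp [hw i]
  · intro w hw ha _
    have hb : ∀ i, |w.2 i - bstar| ≤ 1 := fun i => (hw i).le
    exact ⟨(inv_mul_le_iff₀ hC).mpr (idealLoss_le_mul_momentLoss astar bstar ha hb),
      hupper astar w.1 w.2 ha hb⟩

theorem statement18 (H : ℕ) (astar bstar : ℝ) (hastar : 0 < astar) (hbstar : 0 < bstar) :
    ∃ U : Set ((Fin H → ℝ) × (Fin H → ℝ)),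
      IsOpen U ∧
      {w : (Fin H → ℝ) × (Fin H → ℝ) |
          (∑ i, w.1 i) = astar ∧ ∀ i, w.2 i = bstar} ⊆ U ∧
      ∃ C₁ > (0 : ℝ), ∃ C₂ > (0 : ℝ),
        ∀ w ∈ U, (∀ i, 0 ≤ w.1 i) → (∀ i, 0 < w.2 i) →
          C₁ * ((∑ i, w.1 i - astar) ^ 2
                + (∑ i, (w.1 i * (w.2 i - bstar) ^ 2) ^ 2)
                + (∑ i, w.1 i * (w.2 i - bstar)) ^ 2)
              ≤ ∑ x ∈ Finset.range (H + 1),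
                  (∑ i, w.1 i * w.2 i ^ x - astar * bstar ^ x) ^ 2 ∧
          (∑ x ∈ Finset.range (H + 1),
              (∑ i, w.1 i * w.2 i ^ x - astar * bstar ^ x) ^ 2)
              ≤ C₂ * ((∑ i, w.1 i - astar) ^ 2
                + (∑ i, (w.1 i * (w.2 i - bstar) ^ 2) ^ 2)
                + (∑ i, w.1 i * (w.2 i - bstar)) ^ 2) :=
  statement18_general H astar bstar
end
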